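/- Suppose the grid values satisfy the componentwise monotonicity conditions u_{i+1,j} ≥ u_{i,j} for all 1 ≤ i ≤ N₁−1, 1 ≤ j ≤ N₂, and u_{i,j+1} ≥ u_{i,j} for all 1 ≤ i ≤ N₁, 1 ≤ j ≤ N₂−1. Then the Type-1 piecewise linear function u_N is componentwise non-decreasing on T: for all (x,y), (x′,y′) ∈ T with x ≤ x′ and y ≤ y′ one has u_N(x,y) ≤ u_N(x′,y′). -/

import Mathlib

open Finset Set
open scoped Classical

noncomputable section

/-- Lower-triangle linear piece of the Type-1 PLA over cell `(i,j)`. -/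
def u1l (x y : ℕ → ℝ) (u : ℕ → ℕ → ℝ) (i j : ℕ) (p q : ℝ) : ℝ :=
  ((x (i + 1) - p) / (x (i + 1) - x i)) * u i j
    + ((p - x i) / (x (i + 1) - x i) - (q - y j) / (y (j + 1) - y j)) * u (i + 1) j
    + ((q - y j) / (y (j + 1) - y j)) * u (i + 1) (j + 1)

/-- Upper-triangle linear piece of the Type-1 PLA over cell `(i,j)`. -/
def u1u (x y : ℕ → ℝ) (u : ℕ → ℕ → ℝ) (i j : ℕ) (p q : ℝ) : ℝ :=
  ((y (j + 1) - q) / (y (j + 1) - y j)) * u i j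
    + ((q - y j) / (y (j + 1) - y j) - (p - x i) / (x (i + 1) - x i)) * u i (j + 1)
    + ((p - x i) / (x (i + 1) - x i)) * u (i + 1) (j + 1)

/-- Membership in the half-open interval `X_i` (closed at the left end for `i = 1`). -/
def memX (x : ℕ → ℝ) (i : ℕ) (p : ℝ) : Prop :=
  if i = 1 then x 1 ≤ p ∧ p ≤ x 2 else x i < p ∧ p ≤ x (i + 1)

/-- Membership in the cell `T_{i,j} = X_i × Y_j`. -/
def memCell (x y : ℕ → ℝ) (i j : ℕ) (p q : ℝ) : Prop :=
  memX x i p ∧ memX y j q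

/-- The Type-1 piecewise linear function built from the grid values `u i j`. -/
def uPL (N₁ N₂ : ℕ) (x y : ℕ → ℝ) (u : ℕ → ℕ → ℝ) (p q : ℝ) : ℝ :=
  ∑ i ∈ Finset.Icc 1 (N₁ - 1), ∑ j ∈ Finset.Icc 1 (N₂ - 1),
    if memCell x y i j p q then
      (if (q - y j) * (x (i + 1) - x i) ≤ (p - x i) * (y (j + 1) - y j)
        then u1l x y u i j p q else u1u x y u i j p q)
    else 0

/-!
In local coordinates `s, t ∈ [0, 1]` of a cell with corner values `a, b, c, d`, the Type-1
function is `(1 - s) a + (s - t) b + t c` below the diagonal and `(1 - t) a + (t - s) d + s c`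
above it. Both pieces increase in `s` when the grid values increase in the first index, and they
agree on the diagonal, so the cell function increases in `s`. On the vertical edges `s = 0, 1` it
is the linear interpolation in `t` of one column of grid values, and these interpolants increase
from column to column, which chains the cells along a horizontal line. Exchanging the coordinates
swaps the two pieces, so monotonicity in the second variable follows by transposition.
-/

theorem monotoneOn_Icc_of_le_add_one {α : Type*} [Preorder α] {m n : ℕ} {f : ℕ → α}
    (hf : ∀ k, m ≤ k → k < n → f k ≤ f (k + 1)) : MonotoneOn f (Set.Icc m n) :=
  monotoneOn_of_le_add_one Set.ordConnected_Icc fun k _ hk hk1 => hf k hk.1 hk1.2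

/-- Corner values `a, b, c, d` at `(0,0), (1,0), (1,1), (0,1)`. -/
def type1UnitSquare (a b c d s t : ℝ) : ℝ :=
  if t ≤ s then (1 - s) * a + (s - t) * b + t * c else (1 - t) * a + (t - s) * d + s * c

section UnitSquare

variable {a b c d s s' t : ℝ}

theorem type1UnitSquare_swap (a b c d s t : ℝ) :
    type1UnitSquare a d c b t s = type1UnitSquare a b c d s t := by
  unfold type1UnitSquare
  split_ifs with hst hts hts
  · obtain rfl := le_antisymm hts hst
    ring
  · rfl
  · rfl
  · exact absurd (le_of_not_ge hst) hts

theorem type1UnitSquare_mono_left (hab : a ≤ b) (hdc : d ≤ c) (hs : s ≤ s') :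
    type1UnitSquare a b c d s t ≤ type1UnitSquare a b c d s' t := by
  unfold type1UnitSquare
  split_ifs with h h' h'
  · linarith [mul_nonneg (sub_nonneg.2 hs) (sub_nonneg.2 hab)]
  · exact absurd (h.trans hs) h'
  · -- both pieces equal `(1 - t) * a + t * c` on the diagonal `s = t`
    linarith [mul_nonneg (sub_nonneg.2 (le_of_not_ge h)) (sub_nonneg.2 hdc),
      mul_nonneg (sub_nonneg.2 h') (sub_nonneg.2 hab)]
  · linarith [mul_nonneg (sub_nonneg.2 hs) (sub_nonneg.2 hdc)]

theorem type1UnitSquare_zero_left (ht : 0 ≤ t) :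
    type1UnitSquare a b c d 0 t = (1 - t) * a + t * d := by
  unfold type1UnitSquare
  split_ifs with h
  · obtain rfl := le_antisymm h ht
    ring
  · ring

theorem type1UnitSquare_one_left (ht : t ≤ 1) :
    type1UnitSquare a b c d 1 t = (1 - t) * b + t * c := by
  rw [type1UnitSquare, if_pos ht]
  ring

end UnitSquare

def localCoord (x : ℕ → ℝ) (i : ℕ) (p : ℝ) : ℝ :=
  (p - x i) / (x (i + 1) - x i)

section Grid

variable {N N₁ N₂ : ℕ} {x y : ℕ → ℝ} {u : ℕ → ℕ → ℝ} {i i' j : ℕ}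
  {p p' q q' : ℝ}

theorem localCoord_mono (hx : x i < x (i + 1)) (hpp : p ≤ p') :
    localCoord x i p ≤ localCoord x i p' :=
  div_le_div_of_nonneg_right (by linarith) (by linarith)

theorem localCoord_mem_Icc (hx : x i < x (i + 1)) (hp : p ∈ Set.Icc (x i) (x (i + 1))) :
    localCoord x i p ∈ Set.Icc 0 1 := by
  have hdx : 0 < x (i + 1) - x i := sub_pos.2 hx
  exact ⟨div_nonneg (by linarith [hp.1]) hdx.le, (div_le_one hdx).2 (by linarith [hp.2])⟩

theorem ite_u1l_u1u_eq_type1UnitSquare (hx : x i < x (i + 1)) (hy : y j < y (j + 1)) :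
    (if (q - y j) * (x (i + 1) - x i) ≤ (p - x i) * (y (j + 1) - y j)
      then u1l x y u i j p q else u1u x y u i j p q) =
      type1UnitSquare (u i j) (u (i + 1) j) (u (i + 1) (j + 1)) (u i (j + 1))
        (localCoord x i p) (localCoord y j q) := by
  have hdx : 0 < x (i + 1) - x i := sub_pos.2 hx
  have hdy : 0 < y (j + 1) - y j := sub_pos.2 hy
  have hcond : localCoord y j q ≤ localCoord x i p ↔
      (q - y j) * (x (i + 1) - x i) ≤ (p - x i) * (y (j + 1) - y j) :=
    div_le_div_iff₀ hdy hdx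
  have hx' : (x (i + 1) - p) / (x (i + 1) - x i) = 1 - localCoord x i p := by
    rw [localCoord]; field_simp; ring
  have hy' : (y (j + 1) - q) / (y (j + 1) - y j) = 1 - localCoord y j q := by
    rw [localCoord]; field_simp; ring
  rw [type1UnitSquare, u1l, u1u, hx', hy']
  exact if_congr hcond.symm rfl rfl

theorem mem_Icc_of_memX (h : memX x i p) : p ∈ Set.Icc (x i) (x (i + 1)) := by
  unfold memX at h
  split_ifs at h with hi
  · subst hi
    exact h
  · exact ⟨h.1.le, h.2⟩

theorem exists_memX (hN : 2 ≤ N) (hp : p ∈ Set.Icc (x 1) (x N)) :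
    ∃ i ∈ Finset.Icc 1 (N - 1), memX x i p := by
  induction N, hN using Nat.le_induction with
  | base => exact ⟨1, by simp, by simpa [memX] using hp⟩
  | succ N hN ih =>
    by_cases hpN : p ≤ x N
    · obtain ⟨i, hi, hpi⟩ := ih ⟨hp.1, hpN⟩
      exact ⟨i, by simp only [Finset.mem_Icc] at hi ⊢; omega, hpi⟩
    · refine ⟨N, by simp only [Finset.mem_Icc]; omega, ?_⟩
      rw [memX, if_neg (by omega)]
      exact ⟨lt_of_not_ge hpN, hp.2⟩

theorem le_of_memX_of_memX (hx : MonotoneOn x (Set.Icc 1 N))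
    (hi : i ≤ N - 1) (hi' : 1 ≤ i') (h : memX x i p) (h' : memX x i' p') (hpp : p ≤ p') :
    i ≤ i' := by
  by_contra! hlt
  have hxi : x i < p := by
    rw [memX, if_neg (by omega)] at h
    exact h.1
  have hx_le : x (i' + 1) ≤ x i := hx ⟨by omega, by omega⟩ ⟨by omega, by omega⟩ (by omega)
  linarith [(mem_Icc_of_memX h').2]

theorem eq_of_memX_of_memX (hx : MonotoneOn x (Set.Icc 1 N))
    (hi : i ∈ Finset.Icc 1 (N - 1)) (hi' : i' ∈ Finset.Icc 1 (N - 1))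
    (h : memX x i p) (h' : memX x i' p) : i = i' := by
  rw [Finset.mem_Icc] at hi hi'
  exact le_antisymm (le_of_memX_of_memX hx hi.2 hi'.1 h h' le_rfl)
    (le_of_memX_of_memX hx hi'.2 hi.1 h' h le_rfl)

theorem uPL_eq_type1UnitSquare (hx : ∀ k, 1 ≤ k → k < N₁ → x k < x (k + 1))
    (hy : ∀ k, 1 ≤ k → k < N₂ → y k < y (k + 1))
    (hi : i ∈ Finset.Icc 1 (N₁ - 1)) (hj : j ∈ Finset.Icc 1 (N₂ - 1))
    (hm : memCell x y i j p q) :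
    uPL N₁ N₂ x y u p q =
      type1UnitSquare (u i j) (u (i + 1) j) (u (i + 1) (j + 1)) (u i (j + 1))
        (localCoord x i p) (localCoord y j q) := by
  have hxm := monotoneOn_Icc_of_le_add_one fun k hk hkN => (hx k hk hkN).le
  have hym := monotoneOn_Icc_of_le_add_one fun k hk hkN => (hy k hk hkN).le
  rw [uPL, Finset.sum_eq_single_of_mem i hi, Finset.sum_eq_single_of_mem j hj, if_pos hm]
  · rw [Finset.mem_Icc] at hi hj
    exact ite_u1l_u1u_eq_type1UnitSquare (hx i hi.1 (by omega)) (hy j hj.1 (by omega))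
  · exact fun j' hj' hne => if_neg fun hm' => hne (eq_of_memX_of_memX hym hj' hj hm'.2 hm.2)
  · intro i' hi' hne
    exact Finset.sum_eq_zero fun j' _ => if_neg fun hm' =>
      hne (eq_of_memX_of_memX hxm hi' hi hm'.1 hm.1)

theorem uPL_transpose (hx : ∀ k, 1 ≤ k → k < N₁ → x k < x (k + 1))
    (hy : ∀ k, 1 ≤ k → k < N₂ → y k < y (k + 1)) :
    uPL N₂ N₁ y x (fun j i => u i j) q p = uPL N₁ N₂ x y u p q := by
  unfold uPL
  rw [Finset.sum_comm]
  refine Finset.sum_congr rfl fun i hi => Finset.sum_congr rfl fun j hj => ?_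
  rw [Finset.mem_Icc] at hi hj
  refine if_congr and_comm ?_ rfl
  rw [ite_u1l_u1u_eq_type1UnitSquare (hy j hj.1 (by omega)) (hx i hi.1 (by omega)),
    ite_u1l_u1u_eq_type1UnitSquare (hx i hi.1 (by omega)) (hy j hj.1 (by omega)),
    type1UnitSquare_swap]

theorem uPL_mono_left (hN₁ : 2 ≤ N₁) (hN₂ : 2 ≤ N₂)
    (hx : ∀ k, 1 ≤ k → k < N₁ → x k < x (k + 1))
    (hy : ∀ k, 1 ≤ k → k < N₂ → y k < y (k + 1))
    (hu : ∀ i j, 1 ≤ i → i < N₁ → 1 ≤ j → j ≤ N₂ → u i j ≤ u (i + 1) j)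
    (hp : p ∈ Set.Icc (x 1) (x N₁)) (hp' : p' ∈ Set.Icc (x 1) (x N₁))
    (hq : q ∈ Set.Icc (y 1) (y N₂)) (hpp : p ≤ p') :
    uPL N₁ N₂ x y u p q ≤ uPL N₁ N₂ x y u p' q := by
  obtain ⟨i, hi, hpi⟩ := exists_memX hN₁ hp
  obtain ⟨i', hi', hpi'⟩ := exists_memX hN₁ hp'
  obtain ⟨j, hj, hqj⟩ := exists_memX hN₂ hq
  rw [uPL_eq_type1UnitSquare hx hy hi hj ⟨hpi, hqj⟩,
    uPL_eq_type1UnitSquare hx hy hi' hj ⟨hpi', hqj⟩]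
  rw [Finset.mem_Icc] at hi hi' hj
  set t := localCoord y j q
  have ht : t ∈ Set.Icc 0 1 := localCoord_mem_Icc (hy j hj.1 (by omega)) (mem_Icc_of_memX hqj)
  have hcell : ∀ k, 1 ≤ k → k < N₁ → ∀ s s', s ≤ s' →
      type1UnitSquare (u k j) (u (k + 1) j) (u (k + 1) (j + 1)) (u k (j + 1)) s t ≤
        type1UnitSquare (u k j) (u (k + 1) j) (u (k + 1) (j + 1)) (u k (j + 1)) s' t :=
    fun k hk hkN _ _ hs => type1UnitSquare_mono_left (hu k j hk hkN hj.1 (by omega))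
      (hu k (j + 1) hk hkN (by omega) (by omega)) hs
  have hxm := monotoneOn_Icc_of_le_add_one fun k hk hkN => (hx k hk hkN).le
  rcases (le_of_memX_of_memX hxm hi.2 hi'.1 hpi hpi' hpp).eq_or_lt with rfl | hlt
  · exact hcell i hi.1 (by omega) _ _ (localCoord_mono (hx i hi.1 (by omega)) hpp)
  have hcolumn : MonotoneOn (fun k => (1 - t) * u k j + t * u k (j + 1)) (Set.Icc 1 N₁) :=
    monotoneOn_Icc_of_le_add_one fun k hk hkN =>
      add_le_add (mul_le_mul_of_nonneg_left (hu k j hk hkN hj.1 (by omega)) (by linarith [ht.2]))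
        (mul_le_mul_of_nonneg_left (hu k (j + 1) hk hkN (by omega) (by omega)) ht.1)
  have hs := localCoord_mem_Icc (hx i hi.1 (by omega)) (mem_Icc_of_memX hpi)
  have hs' := localCoord_mem_Icc (hx i' hi'.1 (by omega)) (mem_Icc_of_memX hpi')
  calc _ ≤ type1UnitSquare (u i j) (u (i + 1) j) (u (i + 1) (j + 1)) (u i (j + 1)) 1 t :=
        hcell i hi.1 (by omega) _ _ hs.2
    _ = (1 - t) * u (i + 1) j + t * u (i + 1) (j + 1) := type1UnitSquare_one_left ht.2
    _ ≤ (1 - t) * u i' j + t * u i' (j + 1) :=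
        hcolumn ⟨by omega, by omega⟩ ⟨by omega, by omega⟩ (by omega)
    _ = type1UnitSquare (u i' j) (u (i' + 1) j) (u (i' + 1) (j + 1)) (u i' (j + 1)) 0 t :=
        (type1UnitSquare_zero_left ht.1).symm
    _ ≤ _ := hcell i' hi'.1 (by omega) _ _ hs'.1

theorem uPL_mono_right (hN₁ : 2 ≤ N₁) (hN₂ : 2 ≤ N₂)
    (hx : ∀ k, 1 ≤ k → k < N₁ → x k < x (k + 1))
    (hy : ∀ k, 1 ≤ k → k < N₂ → y k < y (k + 1))
    (hu : ∀ i j, 1 ≤ i → i ≤ N₁ → 1 ≤ j → j < N₂ → u i j ≤ u i (j + 1))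
    (hp : p ∈ Set.Icc (x 1) (x N₁))
    (hq : q ∈ Set.Icc (y 1) (y N₂)) (hq' : q' ∈ Set.Icc (y 1) (y N₂)) (hqq : q ≤ q') :
    uPL N₁ N₂ x y u p q ≤ uPL N₁ N₂ x y u p q' := by
  rw [← uPL_transpose hx hy, ← uPL_transpose hx hy]
  exact uPL_mono_left hN₂ hN₁ hy hx (fun j i hj hjN hi hiN => hu i j hi hiN hj hjN)
    hq hq' hp hqq

end Grid

/-- Componentwise monotonicity of the grid values implies componentwise monotonicity of the
Type-1 piecewise linear function on all of `T`. -/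
theorem type1_PLA_monotone
    (N₁ N₂ : ℕ) (hN₁ : 2 ≤ N₁) (hN₂ : 2 ≤ N₂)
    (x y : ℕ → ℝ)
    (hx : ∀ i, 1 ≤ i → i < N₁ → x i < x (i + 1))
    (hy : ∀ j, 1 ≤ j → j < N₂ → y j < y (j + 1))
    (u : ℕ → ℕ → ℝ)
    (hmono₁ : ∀ i j, 1 ≤ i → i < N₁ → 1 ≤ j → j ≤ N₂ → u i j ≤ u (i + 1) j)
    (hmono₂ : ∀ i j, 1 ≤ i → i ≤ N₁ → 1 ≤ j → j < N₂ → u i j ≤ u i (j + 1)) :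
    ∀ p p' q q', p ∈ Set.Icc (x 1) (x N₁) → p' ∈ Set.Icc (x 1) (x N₁) →
      q ∈ Set.Icc (y 1) (y N₂) → q' ∈ Set.Icc (y 1) (y N₂) →
      p ≤ p' → q ≤ q' →
      uPL N₁ N₂ x y u p q ≤ uPL N₁ N₂ x y u p' q' := by
  intro p p' q q' hp hp' hq hq' hpp hqq
  exact (uPL_mono_left hN₁ hN₂ hx hy hmono₁ hp hp' hq hpp).trans
    (uPL_mono_right hN₁ hN₂ hx hy hmono₂ hp' hq hq' hqq)
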